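/- The sets 𝔅_μ and ℭ_ν are convex and weak*-closed subsets of C_b(Ω)′′ (i.e. they are regularly convex). -/

import Mathlib

open MeasureTheory BoundedContinuousFunction NormedSpace

noncomputable section

variable {d : ℕ}

/-- Extension `h ↦ h ⊕ 0` as a continuous linear map `C_b(X) → C_b(Ω)`. -/
def extX {X Y : Set (EuclideanSpace ℝ (Fin d))} :
    (↥X →ᵇ ℝ) →L[ℝ] ((↥X × ↥Y) →ᵇ ℝ) :=
  LinearMap.mkContinuous
    { toFun := fun h => h.compContinuous (ContinuousMap.fst)
      map_add' := fun h₁ h₂ => by ext z; simp [compContinuous_apply]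
      map_smul' := fun c h => by ext z; simp [compContinuous_apply] }
    1 (fun h => by simpa using h.norm_compContinuous_le (ContinuousMap.fst))

/-- Extension `g ↦ 0 ⊕ g` as a continuous linear map `C_b(Y) → C_b(Ω)`. -/
def extY {X Y : Set (EuclideanSpace ℝ (Fin d))} :
    (↥Y →ᵇ ℝ) →L[ℝ] ((↥X × ↥Y) →ᵇ ℝ) :=
  LinearMap.mkContinuous
    { toFun := fun g => g.compContinuous (ContinuousMap.snd)
      map_add' := fun h₁ h₂ => by ext z; simp [compContinuous_apply]
      map_smul' := fun c h => by ext z; simp [compContinuous_apply] }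
    1 (fun g => by simpa using g.norm_compContinuous_le (ContinuousMap.snd))

/-- A finite Borel measure, as a continuous linear functional on bounded
continuous functions. -/
def integrationCLM {Z : Type*} [TopologicalSpace Z] [MeasurableSpace Z]
    [OpensMeasurableSpace Z] (μ : Measure Z) [IsFiniteMeasure μ] : StrongDual ℝ (Z →ᵇ ℝ) :=
  LinearMap.mkContinuous
    { toFun := fun h => ∫ x, h x ∂μ
      map_add' := fun h g => integral_add (h.integrable μ) (g.integrable μ)
      map_smul' := fun c h => by simpa using integral_smul c (fun x => h x) }
    (μ Set.univ).toReal
    (fun h => by simpa [mul_comm, measureReal_def] using h.norm_integral_le_mul_norm μ)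

/-- The set `𝔅_μ ⊆ C_b(Ω)′′` of elements of the form `b ⊕ 0` with `b(μ) = 0`. -/
def Bmu (X Y : Set (EuclideanSpace ℝ (Fin d))) (μ : Measure ↥X) [IsFiniteMeasure μ] :
    Set (StrongDual ℝ (StrongDual ℝ ((↥X × ↥Y) →ᵇ ℝ))) :=
  {a | ∃ b : StrongDual ℝ (StrongDual ℝ (↥X →ᵇ ℝ)),
    (∀ η : StrongDual ℝ ((↥X × ↥Y) →ᵇ ℝ), a η = b (η.comp extX)) ∧
    b (integrationCLM μ) = 0}

/-- The set `ℭ_ν ⊆ C_b(Ω)′′` of elements of the form `0 ⊕ c` with `c(ν) = 0`. -/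
def Cnu (X Y : Set (EuclideanSpace ℝ (Fin d))) (ν : Measure ↥Y) [IsFiniteMeasure ν] :
    Set (StrongDual ℝ (StrongDual ℝ ((↥X × ↥Y) →ᵇ ℝ))) :=
  {a | ∃ c : StrongDual ℝ (StrongDual ℝ (↥Y →ᵇ ℝ)),
    (∀ η : StrongDual ℝ ((↥X × ↥Y) →ᵇ ℝ), a η = c (η.comp extY)) ∧
    c (integrationCLM ν) = 0}

/-- A subset of the bidual is weak*-closed iff its image under the canonical
identification with the weak* dual is closed. -/
def WeakStarClosed (Z : Type*) [NormedAddCommGroup Z] [NormedSpace ℝ Z]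
    (S : Set (StrongDual ℝ Z)) : Prop :=
  IsClosed ((fun φ : StrongDual ℝ Z => StrongDual.toWeakDual φ) '' S : Set (WeakDual ℝ Z))

/-!
Both sets are images `T''(m^⊥)` of the annihilator of a functional `m` under the bitranspose of
an extension map `T`. Since `T` has a left inverse `R` (restriction to a slice `y = y₀` or
`x = x₀`, which exists because the measures force `X` and `Y` to be nonempty), `T''(m^⊥)` is cut
out by weak*-continuous conditions: `a` kills `ker T'` and `a (R' m) = 0`.
-/

section Bitranspose

variable {E F : Type*} [NormedAddCommGroup E] [NormedSpace ℝ E]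
  [NormedAddCommGroup F] [NormedSpace ℝ F]

def bitransposeImageAnnihilator (T : F →L[ℝ] E) (m : StrongDual ℝ F) :
    Set (StrongDual ℝ (StrongDual ℝ E)) :=
  {a | ∃ b : StrongDual ℝ (StrongDual ℝ F), (∀ η, a η = b (η.comp T)) ∧ b m = 0}

theorem convex_bitransposeImageAnnihilator (T : F →L[ℝ] E) (m : StrongDual ℝ F) :
    Convex ℝ (bitransposeImageAnnihilator T m) := by
  rintro a ⟨b, hab, hbm⟩ a' ⟨b', hab', hbm'⟩ s t - - -
  refine ⟨s • b + t • b', fun η => ?_, ?_⟩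
  · simp [hab η, hab' η]
  · simp [hbm, hbm']

theorem mem_bitransposeImageAnnihilator_iff {T : F →L[ℝ] E} {R : E →L[ℝ] F}
    (hRT : R.comp T = .id ℝ F) (m : StrongDual ℝ F) (a : StrongDual ℝ (StrongDual ℝ E)) :
    a ∈ bitransposeImageAnnihilator T m ↔
      (∀ η : StrongDual ℝ E, η.comp T = 0 → a η = 0) ∧ a (m.comp R) = 0 := by
  have hRT' (φ : StrongDual ℝ F) : (φ.comp R).comp T = φ := by
    rw [ContinuousLinearMap.comp_assoc, hRT, ContinuousLinearMap.comp_id]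
  constructor
  · rintro ⟨b, hab, hbm⟩
    refine ⟨fun η hη => ?_, ?_⟩
    · rw [hab, hη, map_zero]
    · rw [hab, hRT', hbm]
  · rintro ⟨hker, hm⟩
    refine ⟨a.comp (ContinuousLinearMap.precomp ℝ R), fun η => ?_, hm⟩
    have hη : (η - (η.comp T).comp R).comp T = 0 := by
      rw [ContinuousLinearMap.sub_comp, hRT', sub_self]
    simpa [sub_eq_zero] using hker _ hη

theorem weakStarClosed_bitransposeImageAnnihilator {T : F →L[ℝ] E} {R : E →L[ℝ] F}
    (hRT : R.comp T = .id ℝ F) (m : StrongDual ℝ F) :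
    WeakStarClosed (StrongDual ℝ E) (bitransposeImageAnnihilator T m) := by
  have himage : (fun a => StrongDual.toWeakDual a) '' bitransposeImageAnnihilator T m =
      (⋂ η ∈ {η : StrongDual ℝ E | η.comp T = 0}, {ψ : WeakDual ℝ _ | ψ η = 0}) ∩
        {ψ | ψ (m.comp R) = 0} := by
    ext ψ
    simp only [Set.mem_image, Set.mem_inter_iff, Set.mem_iInter₂, Set.mem_ofPred_eq,
      mem_bitransposeImageAnnihilator_iff hRT]
    exact ⟨fun ⟨a, ha, hψ⟩ => hψ ▸ ha,
      fun h => ⟨StrongDual.toWeakDual.symm ψ, h, rfl⟩⟩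
  rw [WeakStarClosed, himage]
  exact (isClosed_biInter fun η _ =>
    isClosed_eq (WeakDual.eval_continuous η) continuous_const).inter
      (isClosed_eq (WeakDual.eval_continuous _) continuous_const)

end Bitranspose

theorem compContinuousCLM_prodMk_const_comp_extX {X Y : Set (EuclideanSpace ℝ (Fin d))}
    (y₀ : ↥Y) :
    (compContinuousCLM ℝ ℝ ((ContinuousMap.id ↥X).prodMk (.const ↥X y₀))).comp extX =
      .id ℝ (↥X →ᵇ ℝ) := by
  ext h x
  simp [extX]

theorem compContinuousCLM_prodMk_const_comp_extY {X Y : Set (EuclideanSpace ℝ (Fin d))}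
    (x₀ : ↥X) :
    (compContinuousCLM ℝ ℝ ((ContinuousMap.const ↥Y x₀).prodMk (.id ↥Y))).comp extY =
      .id ℝ (↥Y →ᵇ ℝ) := by
  ext g y
  simp [extY]

theorem stmt8_general
    (X Y : Set (EuclideanSpace ℝ (Fin d)))
    (μ : Measure ↥X) [IsProbabilityMeasure μ]
    (ν : Measure ↥Y) [IsProbabilityMeasure ν] :
    Convex ℝ (Bmu X Y μ) ∧
    WeakStarClosed (StrongDual ℝ ((↥X × ↥Y) →ᵇ ℝ)) (Bmu X Y μ) ∧
    Convex ℝ (Cnu X Y ν) ∧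
    WeakStarClosed (StrongDual ℝ ((↥X × ↥Y) →ᵇ ℝ)) (Cnu X Y ν) := by
  obtain ⟨x₀⟩ := nonempty_of_isProbabilityMeasure μ
  obtain ⟨y₀⟩ := nonempty_of_isProbabilityMeasure ν
  exact ⟨convex_bitransposeImageAnnihilator _ _,
    weakStarClosed_bitransposeImageAnnihilator (compContinuousCLM_prodMk_const_comp_extX y₀) _,
    convex_bitransposeImageAnnihilator _ _,
    weakStarClosed_bitransposeImageAnnihilator (compContinuousCLM_prodMk_const_comp_extY x₀) _⟩

theorem stmt8
    (X Y : Set (EuclideanSpace ℝ (Fin d)))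
    (hXcl : IsClosed X) (hXcv : Convex ℝ X) (hYcl : IsClosed Y) (hYcv : Convex ℝ Y)
    (μ : Measure ↥X) [IsProbabilityMeasure μ]
    (ν : Measure ↥Y) [IsProbabilityMeasure ν] :
    Convex ℝ (Bmu X Y μ) ∧
    WeakStarClosed (StrongDual ℝ ((↥X × ↥Y) →ᵇ ℝ)) (Bmu X Y μ) ∧
    Convex ℝ (Cnu X Y ν) ∧
    WeakStarClosed (StrongDual ℝ ((↥X × ↥Y) →ᵇ ℝ)) (Cnu X Y ν) :=
  stmt8_general X Y μ ν

end
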